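/- Let k, γ, m₀, m₁ be real numbers with m₀ > 0, m₁ > 0 and 2k > γ. Let M : ℝ → (6×6 real matrices) be a differentiable matrix-valued function such that for every t: M(t) is symmetric and invertible, m₀‖x‖² ≤ xᵀ M(t) x ≤ m₁‖x‖² for all x ∈ ℝ⁶, and |xᵀ M'(t) x| ≤ γ‖x‖² for all x ∈ ℝ⁶. Let e : ℝ → ℝ⁶ be differentiable with e'(t) = -k · M(t)⁻¹ · e(t) for all t. Then for all t ≥ 0, the Lyapunov function V(t) = e(t)ᵀ M(t) e(t) satisfies V(t) ≤ V(0) · exp(-((2k-γ)/m₁) t), and consequently ‖e(t)‖² ≤ (m₁/m₀) ‖e(0)‖² · exp(-((2k-γ)/m₁) t). -/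

import Mathlib

open Matrix

/-- Euclidean norm of a vector in `ℝⁿ` (identified with `Fin n → ℝ`). -/
noncomputable def eNorm {n : ℕ} (x : Fin n → ℝ) : ℝ := Real.sqrt (x ⬝ᵥ x)

/-- Entrywise derivative of a matrix-valued function. -/
noncomputable def matDeriv {n : ℕ} (M : ℝ → Matrix (Fin n) (Fin n) ℝ) (t : ℝ) :
    Matrix (Fin n) (Fin n) ℝ :=
  Matrix.of fun i j => deriv (fun s => M s i j) t

/-!
Along the flow `e' = -k M⁻¹ e` with `M` symmetric, the cross terms of
`V' = e'ᵀ M e + eᵀ M' e + eᵀ M e'` both equal `-k ‖e‖²`, so `V' ≤ (γ - 2k) ‖e‖²`.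
Since `V ≤ m₁ ‖e‖²` this gives `V' ≤ -((2k - γ)/m₁) V`, and Grönwall's inequality yields the
exponential decay of `V`; the bound on `‖e‖²` follows from `m₀ ‖e‖² ≤ V`.
-/

lemma eNorm_sq {n : ℕ} (x : Fin n → ℝ) : eNorm x ^ 2 = x ⬝ᵥ x :=
  Real.sq_sqrt (Finset.sum_nonneg fun i _ => mul_self_nonneg (x i))

section Derivatives

variable {ι : Type*} [Fintype ι] {x y : ℝ → ι → ℝ} {x' y' : ι → ℝ}
  {M : ℝ → Matrix ι ι ℝ} {M' : Matrix ι ι ℝ} {t : ℝ}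

theorem HasDerivAt.dotProduct (hx : HasDerivAt x x' t) (hy : HasDerivAt y y' t) :
    HasDerivAt (fun s => x s ⬝ᵥ y s) (x' ⬝ᵥ y t + x t ⬝ᵥ y') t := by
  have hsum : HasDerivAt (fun s => ∑ i, x s i * y s i) (∑ i, (x' i * y t i + x t i * y' i)) t :=
    HasDerivAt.fun_sum fun i _ => (hasDerivAt_pi.mp hx i).fun_mul (hasDerivAt_pi.mp hy i)
  rwa [Finset.sum_add_distrib] at hsum

theorem HasDerivAt.mulVec (hM : ∀ i j, HasDerivAt (fun s => M s i j) (M' i j) t)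
    (hy : HasDerivAt y y' t) :
    HasDerivAt (fun s => M s *ᵥ y s) (M' *ᵥ y t + M t *ᵥ y') t :=
  hasDerivAt_pi.mpr fun i => (hasDerivAt_pi.mpr (hM i)).dotProduct hy

theorem HasDerivAt.dotProduct_mulVec (hx : HasDerivAt x x' t)
    (hM : ∀ i j, HasDerivAt (fun s => M s i j) (M' i j) t) (hy : HasDerivAt y y' t) :
    HasDerivAt (fun s => x s ⬝ᵥ M s *ᵥ y s)
      (x' ⬝ᵥ M t *ᵥ y t + x t ⬝ᵥ M' *ᵥ y t + x t ⬝ᵥ M t *ᵥ y') t := by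
  convert hx.dotProduct (HasDerivAt.mulVec hM hy) using 1
  rw [dotProduct_add, add_assoc]

end Derivatives

section Flow

variable {ι : Type*} [Fintype ι] [DecidableEq ι] {A : Matrix ι ι ℝ}

lemma inv_mulVec_dotProduct_mulVec (hA : A.IsSymm) (hdet : IsUnit A.det) (v : ι → ℝ) :
    A⁻¹ *ᵥ v ⬝ᵥ A *ᵥ v = v ⬝ᵥ v := by
  rw [dotProduct_mulVec, ← mulVec_transpose, hA.eq, mulVec_mulVec, mul_nonsing_inv _ hdet,
    one_mulVec]

lemma quadForm_deriv_along_flow (hA : A.IsSymm) (hdet : IsUnit A.det) (A' : Matrix ι ι ℝ)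
    (k : ℝ) (v : ι → ℝ) :
    (-k) • A⁻¹ *ᵥ v ⬝ᵥ A *ᵥ v + v ⬝ᵥ A' *ᵥ v + v ⬝ᵥ A *ᵥ ((-k) • A⁻¹ *ᵥ v)
      = v ⬝ᵥ A' *ᵥ v - 2 * k * (v ⬝ᵥ v) := by
  rw [smul_dotProduct, inv_mulVec_dotProduct_mulVec hA hdet, mulVec_smul, mulVec_mulVec,
    mul_nonsing_inv _ hdet, one_mulVec, dotProduct_smul, smul_eq_mul]
  ring

end Flow

theorem le_mul_exp_of_hasDerivAt_le_neg_mul {V V' : ℝ → ℝ} {c a t : ℝ}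
    (hV : ∀ s, HasDerivAt V (V' s) s) (hbound : ∀ s, V' s ≤ -c * V s) (hat : a ≤ t) :
    V t ≤ V a * Real.exp (-c * (t - a)) := by
  have hcont : ContinuousOn V (Set.Icc a t) := fun s _ => (hV s).continuousAt.continuousWithinAt
  have := le_gronwallBound_of_liminf_deriv_right_le (K := -c) (ε := 0) hcont
    (fun s _ _ hr => (hV s).hasDerivWithinAt.liminf_right_slope_le hr) le_rfl
    (fun s _ => by rw [add_zero]; exact hbound s) t ⟨hat, le_rfl⟩
  rwa [gronwallBound_ε0] at this

/-- quantitative exponential convergence of the observer error under the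
gain condition `2k > γ` and uniform eigenvalue bounds `m₀‖x‖² ≤ xᵀ M x ≤ m₁‖x‖²`. -/
theorem observer_error_exponential_convergence
    (k γ m₀ m₁ : ℝ) (hm₀ : 0 < m₀) (hm₁ : 0 < m₁) (hk : 2 * k > γ)
    (M : ℝ → Matrix (Fin 6) (Fin 6) ℝ)
    (hMdiff : ∀ i j, Differentiable ℝ fun t => M t i j)
    (hMsymm : ∀ t, (M t).IsSymm)
    (hMinv : ∀ t, IsUnit (M t).det)
    (hMlb : ∀ t, ∀ x : Fin 6 → ℝ, m₀ * eNorm x ^ 2 ≤ x ⬝ᵥ (M t).mulVec x)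
    (hMub : ∀ t, ∀ x : Fin 6 → ℝ, x ⬝ᵥ (M t).mulVec x ≤ m₁ * eNorm x ^ 2)
    (hMrate : ∀ t, ∀ x : Fin 6 → ℝ, |x ⬝ᵥ (matDeriv M t).mulVec x| ≤ γ * eNorm x ^ 2)
    (e : ℝ → Fin 6 → ℝ) (he : Differentiable ℝ e)
    (hdyn : ∀ t, deriv e t = (-k) • (M t)⁻¹.mulVec (e t)) :
    ∀ t ≥ (0 : ℝ),
      e t ⬝ᵥ (M t).mulVec (e t)
          ≤ (e 0 ⬝ᵥ (M 0).mulVec (e 0)) * Real.exp (-((2 * k - γ) / m₁) * t) ∧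
      eNorm (e t) ^ 2
          ≤ (m₁ / m₀) * eNorm (e 0) ^ 2 * Real.exp (-((2 * k - γ) / m₁) * t) := by
  intro t ht
  have hV : ∀ s, HasDerivAt (fun s => e s ⬝ᵥ M s *ᵥ e s)
      (e s ⬝ᵥ matDeriv M s *ᵥ e s - 2 * k * (e s ⬝ᵥ e s)) s := fun s => by
    have hderiv := (he s).hasDerivAt.dotProduct_mulVec (M' := matDeriv M s)
      (fun i j => (hMdiff i j s).hasDerivAt) (he s).hasDerivAt
    rwa [hdyn s, quadForm_deriv_along_flow (hMsymm s) (hMinv s)] at hderiv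
  have hdecay : ∀ s, e s ⬝ᵥ matDeriv M s *ᵥ e s - 2 * k * (e s ⬝ᵥ e s)
      ≤ -((2 * k - γ) / m₁) * (e s ⬝ᵥ M s *ᵥ e s) := fun s => by
    have hrate := (abs_le.mp (hMrate s (e s))).2
    have hub := mul_le_mul_of_nonneg_left (hMub s (e s))
      (div_nonneg (sub_nonneg.mpr hk.le) hm₁.le)
    rw [← mul_assoc, div_mul_cancel₀ _ hm₁.ne', eNorm_sq] at hub
    rw [eNorm_sq] at hrate
    linarith
  have hVt := le_mul_exp_of_hasDerivAt_le_neg_mul hV hdecay ht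
  rw [sub_zero] at hVt
  refine ⟨hVt, ?_⟩
  rw [div_mul_eq_mul_div, div_mul_eq_mul_div, le_div_iff₀ hm₀, mul_comm]
  calc m₀ * eNorm (e t) ^ 2 ≤ e t ⬝ᵥ M t *ᵥ e t := hMlb t (e t)
    _ ≤ _ := hVt
    _ ≤ _ := mul_le_mul_of_nonneg_right (hMub 0 (e 0)) (Real.exp_pos _).le
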